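/- Substitution lemma for system U: if Φ_t is a derivation of Γ; x:[σ_i]_{i∈I} ⊢ t : τ and for each i ∈ I, Φ^i_u is a derivation of Δ_i ⊢ u : σ_i, all in system U, then there is a derivation Φ of Γ +_{i∈I} Δ_i ⊢ t{x:=u} : τ in system U with |Φ| = |Φ_t| + Σ_{i∈I}|Φ^i_u| − |I|. -/

import Mathlib

/-! # The Bang Calculus Revisited: common definitions.

Terms are represented with de Bruijn indices, so that all the meta-level
substitutions are capture-avoiding by construction. -/

/-- Terms of the λ!-calculus.  `esub t u` is the explicit substitution
`t[0\u]`: the (anonymous) binder scopes over `t`, not over `u`. -/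
inductive Tm : Type
  | var : ℕ → Tm
  | app : Tm → Tm → Tm
  | lam : Tm → Tm
  | bang : Tm → Tm
  | der : Tm → Tm
  | esub : Tm → Tm → Tm
  deriving DecidableEq

namespace Tm

/-- lifting a renaming under a binder -/
def liftR (f : ℕ → ℕ) : ℕ → ℕ
  | 0 => 0
  | k + 1 => f k + 1

/-- renaming of free variables -/
def rename (f : ℕ → ℕ) : Tm → Tm
  | var k => var (f k)
  | app t u => app (rename f t) (rename f u)
  | lam t => lam (rename (liftR f) t)
  | bang t => bang (rename f t)
  | der t => der (rename f t)
  | esub t u => esub (rename (liftR f) t) (rename f u)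

/-- lifting a simultaneous substitution under a binder -/
def liftS (σ : ℕ → Tm) : ℕ → Tm
  | 0 => var 0
  | k + 1 => rename (· + 1) (σ k)

/-- simultaneous (capture-avoiding) substitution -/
def subst (σ : ℕ → Tm) : Tm → Tm
  | var k => σ k
  | app t u => app (subst σ t) (subst σ u)
  | lam t => lam (subst (liftS σ) t)
  | bang t => bang (subst σ t)
  | der t => der (subst σ t)
  | esub t u => esub (subst (liftS σ) t) (subst σ u)

/-- capture-avoiding substitution of `u` for the variable `0` of `t`,
where the result is placed under `n` extra binders (and `u` already lives
at that depth). -/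
def substIn (n : ℕ) (u : Tm) (t : Tm) : Tm :=
  subst (fun k => match k with
    | 0 => u
    | k + 1 => var (k + n)) t

/-- capture-avoiding meta-level substitution `t{0 := u}` -/
def subst0 (u : Tm) (t : Tm) : Tm := substIn 0 u t

/-- plugging a term into a list context `L ::= ◻ | L[x\t]`; the head of the
list is the argument of the outermost explicit substitution. -/
def plug : List Tm → Tm → Tm
  | [], s => s
  | e :: L, s => esub (plug L s) e

/-- the w-size of a term -/
def wsize : Tm → ℕ
  | var _ => 0
  | app t u => 1 + wsize t + wsize u
  | lam t => 1 + wsize t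
  | bang _ => 0
  | der t => 1 + wsize t
  | esub t u => 1 + wsize t + wsize u

end Tm

/-- the names of the three rewriting rules of the λ!-calculus -/
inductive Rule : Type
  | dB | sb | db
  deriving DecidableEq

open Tm in
/-- the three rewriting rules, applied at the root (at a distance) -/
inductive Root : Rule → Tm → Tm → Prop
  | dB (L : List Tm) (t u : Tm) :
      Root .dB (app (plug L (lam t)) u)
               (plug L (esub t (rename (· + L.length) u)))
  | sb (L : List Tm) (t u : Tm) :
      Root .sb (esub t (plug L (bang u))) (plug L (substIn L.length u t))
  | db (L : List Tm) (t : Tm) :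
      Root .db (der (plug L (bang t))) (plug L t)

/-- closure of each rule under weak contexts (no reduction under `bang`) -/
inductive Step : Rule → Tm → Tm → Prop
  | root {r : Rule} {t t' : Tm} : Root r t t' → Step r t t'
  | appL {r t t'} (u : Tm) : Step r t t' → Step r (Tm.app t u) (Tm.app t' u)
  | appR {r u u'} (t : Tm) : Step r u u' → Step r (Tm.app t u) (Tm.app t u')
  | lam {r t t'} : Step r t t' → Step r (Tm.lam t) (Tm.lam t')
  | der {r t t'} : Step r t t' → Step r (Tm.der t) (Tm.der t')
  | esubL {r t t'} (u : Tm) : Step r t t' → Step r (Tm.esub t u) (Tm.esub t' u)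
  | esubR {r u u'} (t : Tm) : Step r u u' → Step r (Tm.esub t u) (Tm.esub t u')

/-- the weak reduction `→w` of the λ!-calculus -/
def StepW (t t' : Tm) : Prop := ∃ r, Step r t t'

/-- counted weak reduction: `RedCnt t (b, e) u` holds iff `t →w* u` using `b`
dB-steps and `e` steps of kind s!/d!. -/
inductive RedCnt : Tm → ℕ × ℕ → Tm → Prop
  | refl (t : Tm) : RedCnt t (0, 0) t
  | db {t t₁ u : Tm} {b e : ℕ} :
      Step .dB t t₁ → RedCnt t₁ (b, e) u → RedCnt t (b + 1, e) u
  | ex {t t₁ u : Tm} {b e : ℕ} :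
      (Step .sb t t₁ ∨ Step .db t t₁) → RedCnt t₁ (b, e) u →
      RedCnt t (b, e + 1) u

mutual
  /-- neutral w-normal terms -/
  inductive NeW : Tm → Prop
    | var (k : ℕ) : NeW (Tm.var k)
    | app {t u : Tm} : NaW t → NoW u → NeW (Tm.app t u)
    | der {t : Tm} : NbW t → NeW (Tm.der t)
    | esub {t u : Tm} : NeW t → NbW u → NeW (Tm.esub t u)
  /-- neutral-abs w-normal terms -/
  inductive NaW : Tm → Prop
    | bang (t : Tm) : NaW (Tm.bang t)
    | ne {t : Tm} : NeW t → NaW t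
    | esub {t u : Tm} : NaW t → NbW u → NaW (Tm.esub t u)
  /-- neutral-bang w-normal terms -/
  inductive NbW : Tm → Prop
    | ne {t : Tm} : NeW t → NbW t
    | lam {t : Tm} : NoW t → NbW (Tm.lam t)
    | esub {t u : Tm} : NbW t → NbW u → NbW (Tm.esub t u)
  /-- w-normal terms -/
  inductive NoW : Tm → Prop
    | na {t : Tm} : NaW t → NoW t
    | nb {t : Tm} : NbW t → NoW t
end

/-- clashes -/
inductive Clash : Tm → Prop
  | appBang (L : List Tm) (t u : Tm) : Clash (Tm.app (Tm.plug L (Tm.bang t)) u)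
  | esubLam (L : List Tm) (t u : Tm) : Clash (Tm.esub t (Tm.plug L (Tm.lam u)))
  | derLam (L : List Tm) (u : Tm) : Clash (Tm.der (Tm.plug L (Tm.lam u)))
  | appLam (L : List Tm) (t u : Tm) : Clash (Tm.app t (Tm.plug L (Tm.lam u)))

/-- `WSub t s` holds iff `t = W⟨s⟩` for some weak context `W` -/
inductive WSub : Tm → Tm → Prop
  | refl (t : Tm) : WSub t t
  | appL {t s : Tm} (u : Tm) : WSub t s → WSub (Tm.app t u) s
  | appR {u s : Tm} (t : Tm) : WSub u s → WSub (Tm.app t u) s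
  | lam {t s : Tm} : WSub t s → WSub (Tm.lam t) s
  | der {t s : Tm} : WSub t s → WSub (Tm.der t) s
  | esubL {t s : Tm} (u : Tm) : WSub t s → WSub (Tm.esub t u) s
  | esubR {u s : Tm} (t : Tm) : WSub u s → WSub (Tm.esub t u) s

/-- weak clash freeness -/
def Wcf (t : Tm) : Prop := ¬ ∃ s, WSub t s ∧ Clash s

mutual
  /-- neutral weak clash free normal terms -/
  inductive NeCF : Tm → Prop
    | var (k : ℕ) : NeCF (Tm.var k)
    | app {t u : Tm} : NeCF t → NaCF u → NeCF (Tm.app t u)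
    | der {t : Tm} : NeCF t → NeCF (Tm.der t)
    | esub {t u : Tm} : NeCF t → NeCF u → NeCF (Tm.esub t u)
  /-- neutral-abs weak clash free normal terms -/
  inductive NaCF : Tm → Prop
    | bang (t : Tm) : NaCF (Tm.bang t)
    | ne {t : Tm} : NeCF t → NaCF t
    | esub {t u : Tm} : NaCF t → NeCF u → NaCF (Tm.esub t u)
  /-- neutral-bang weak clash free normal terms -/
  inductive NbCF : Tm → Prop
    | ne {t : Tm} : NeCF t → NbCF t
    | lam {t : Tm} : NoCF t → NbCF (Tm.lam t)
    | esub {t u : Tm} : NbCF t → NeCF u → NbCF (Tm.esub t u)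
  /-- weak clash free normal terms -/
  inductive NoCF : Tm → Prop
    | na {t : Tm} : NaCF t → NoCF t
    | nb {t : Tm} : NbCF t → NoCF t
end

/-- Types of system 𝒰: base types, multiset types and arrow types.  A
multiset type is given by a list of types (a representative of the multiset
it determines). -/
inductive Ty : Type
  | base : ℕ → Ty
  | mult : List Ty → Ty
  | arr : List Ty → Ty → Ty

/-- typing contexts: functions from (de Bruijn) variables to multiset types -/
abbrev Ctx := ℕ → Multiset Ty

/-- the context mapping `k` to `M` and anything else to the empty multiset -/
def Ctx.single (k : ℕ) (M : Multiset Ty) : Ctx := fun j => if j = k then M else 0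

/-- removing the (type of the) bound variable `0` from a context -/
def Ctx.tail (Γ : Ctx) : Ctx := fun k => Γ (k + 1)

/-- extending a context with a multiset type for a fresh variable `0` -/
def Ctx.cons (M : Multiset Ty) (Γ : Ctx) : Ctx := fun k =>
  match k with
  | 0 => M
  | k + 1 => Γ k

/-- Sized typing of system 𝒰: `DerU Γ t τ n` means that there is a derivation
of `Γ ⊢ t : τ` whose size (number of rules, not counting `bg`) is `n`. -/
inductive DerU : Ctx → Tm → Ty → ℕ → Prop
  | ax (k : ℕ) (σ : Ty) : DerU (Ctx.single k {σ}) (Tm.var k) σ 1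
  | app {Γ Δ : Ctx} {t u : Tm} {M : List Ty} {τ : Ty} {n m : ℕ} :
      DerU Γ t (Ty.arr M τ) n → DerU Δ u (Ty.mult M) m →
      DerU (Γ + Δ) (Tm.app t u) τ (n + m + 1)
  | abs {Γ : Ctx} {t : Tm} {τ : Ty} {n : ℕ} (M : List Ty) :
      DerU Γ t τ n → Multiset.ofList M = Γ 0 →
      DerU (Ctx.tail Γ) (Tm.lam t) (Ty.arr M τ) (n + 1)
  | es {Γ Δ : Ctx} {t u : Tm} {σ : Ty} {M : List Ty} {n m : ℕ} :
      DerU Γ t σ n → DerU Δ u (Ty.mult M) m → Multiset.ofList M = Γ 0 →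
      DerU (Ctx.tail Γ + Δ) (Tm.esub t u) σ (n + m + 1)
  | bg {t : Tm} (prs : List (Ctx × Ty × ℕ)) :
      (∀ p ∈ prs, DerU p.1 t p.2.1 p.2.2) →
      DerU ((prs.map (·.1)).sum) (Tm.bang t)
           (Ty.mult (prs.map (·.2.1))) ((prs.map (·.2.2)).sum)
  | dr {Γ : Ctx} {t : Tm} {σ : Ty} {n : ℕ} :
      DerU Γ t (Ty.mult [σ]) n → DerU Γ (Tm.der t) σ (n + 1)

/-! ## The source λ-calculus with explicit substitutions (CBN / CBV) -/

/-- terms of the λ-calculus with explicit substitutions (de Bruijn) -/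
inductive Lm : Type
  | var : ℕ → Lm
  | app : Lm → Lm → Lm
  | lam : Lm → Lm
  | esub : Lm → Lm → Lm
  deriving DecidableEq

namespace Lm

def liftR (f : ℕ → ℕ) : ℕ → ℕ
  | 0 => 0
  | k + 1 => f k + 1

def rename (f : ℕ → ℕ) : Lm → Lm
  | var k => var (f k)
  | app t u => app (rename f t) (rename f u)
  | lam t => lam (rename (liftR f) t)
  | esub t u => esub (rename (liftR f) t) (rename f u)

def liftS (σ : ℕ → Lm) : ℕ → Lm
  | 0 => var 0
  | k + 1 => rename (· + 1) (σ k)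

def subst (σ : ℕ → Lm) : Lm → Lm
  | var k => σ k
  | app t u => app (subst σ t) (subst σ u)
  | lam t => lam (subst (liftS σ) t)
  | esub t u => esub (subst (liftS σ) t) (subst σ u)

def substIn (n : ℕ) (u : Lm) (t : Lm) : Lm :=
  subst (fun k => match k with
    | 0 => u
    | k + 1 => var (k + n)) t

/-- capture-avoiding meta-level substitution `t{0 := u}` -/
def subst0 (u : Lm) (t : Lm) : Lm := substIn 0 u t

def plug : List Lm → Lm → Lm
  | [], s => s
  | e :: L, s => esub (plug L s) e

/-- values -/
def IsVal : Lm → Prop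
  | var _ => True
  | lam _ => True
  | _ => False

/-- the n-size of a term -/
def nsize : Lm → ℕ
  | var _ => 0
  | lam t => 1 + nsize t
  | app t _ => 1 + nsize t
  | esub t _ => 1 + nsize t

/-- the v-size of a term -/
def vsize : Lm → ℕ
  | var _ => 0
  | lam _ => 0
  | app t u => 1 + vsize t + vsize u
  | esub t u => 1 + vsize t + vsize u

end Lm

/-- names of the CBN rules -/
inductive NRule : Type
  | dB | s
  deriving DecidableEq

/-- call-by-name reduction (closure of dB and s under CBN contexts) -/
inductive StepN : NRule → Lm → Lm → Prop
  | dB (L : List Lm) (t u : Lm) :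
      StepN .dB (Lm.app (Lm.plug L (Lm.lam t)) u)
                (Lm.plug L (Lm.esub t (Lm.rename (· + L.length) u)))
  | s (t u : Lm) : StepN .s (Lm.esub t u) (Lm.subst0 u t)
  | appL {r t t'} (u : Lm) : StepN r t t' → StepN r (Lm.app t u) (Lm.app t' u)
  | lam {r t t'} : StepN r t t' → StepN r (Lm.lam t) (Lm.lam t')
  | esubL {r t t'} (u : Lm) : StepN r t t' → StepN r (Lm.esub t u) (Lm.esub t' u)

/-- names of the CBV rules -/
inductive VRule : Type
  | dB | sv
  deriving DecidableEq

/-- call-by-value reduction (closure of dB and sv under CBV contexts) -/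
inductive StepV : VRule → Lm → Lm → Prop
  | dB (L : List Lm) (t u : Lm) :
      StepV .dB (Lm.app (Lm.plug L (Lm.lam t)) u)
                (Lm.plug L (Lm.esub t (Lm.rename (· + L.length) u)))
  | sv (L : List Lm) (t v : Lm) (hv : Lm.IsVal v) :
      StepV .sv (Lm.esub t (Lm.plug L v)) (Lm.plug L (Lm.substIn L.length v t))
  | appL {r t t'} (u : Lm) : StepV r t t' → StepV r (Lm.app t u) (Lm.app t' u)
  | appR {r u u'} (t : Lm) : StepV r u u' → StepV r (Lm.app t u) (Lm.app t u')
  | esubL {r t t'} (u : Lm) : StepV r t t' → StepV r (Lm.esub t u) (Lm.esub t' u)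
  | esubR {r u u'} (t : Lm) : StepV r u u' → StepV r (Lm.esub t u) (Lm.esub t u')

mutual
  /-- CBN neutral terms -/
  inductive NeN : Lm → Prop
    | var (k : ℕ) : NeN (Lm.var k)
    | app {t : Lm} (u : Lm) : NeN t → NeN (Lm.app t u)
  /-- CBN normal terms -/
  inductive NoN : Lm → Prop
    | lam {t : Lm} : NoN t → NoN (Lm.lam t)
    | ne {t : Lm} : NeN t → NoN t
end

mutual
  /-- CBV (substituted) variables -/
  inductive VrV : Lm → Prop
    | var (k : ℕ) : VrV (Lm.var k)
    | esub {t u : Lm} : VrV t → NeV u → VrV (Lm.esub t u)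
  /-- CBV neutral terms -/
  inductive NeV : Lm → Prop
    | app₁ {t u : Lm} : VrV t → NoV u → NeV (Lm.app t u)
    | app₂ {t u : Lm} : NeV t → NoV u → NeV (Lm.app t u)
    | esub {t u : Lm} : NeV t → NeV u → NeV (Lm.esub t u)
  /-- CBV normal terms -/
  inductive NoV : Lm → Prop
    | lam (t : Lm) : NoV (Lm.lam t)
    | vr {t : Lm} : VrV t → NoV t
    | ne {t : Lm} : NeV t → NoV t
    | esub {t u : Lm} : NoV t → NeV u → NoV (Lm.esub t u)
end

/-- counted CBN reduction, recording the number of dB- and s-steps -/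
inductive RedCntN : Lm → ℕ × ℕ → Lm → Prop
  | refl (t : Lm) : RedCntN t (0, 0) t
  | db {t t₁ u : Lm} {b e : ℕ} :
      StepN .dB t t₁ → RedCntN t₁ (b, e) u → RedCntN t (b + 1, e) u
  | s {t t₁ u : Lm} {b e : ℕ} :
      StepN .s t t₁ → RedCntN t₁ (b, e) u → RedCntN t (b, e + 1) u

/-- counted CBV reduction, recording the number of dB- and sv-steps -/
inductive RedCntV : Lm → ℕ × ℕ → Lm → Prop
  | refl (t : Lm) : RedCntV t (0, 0) t
  | db {t t₁ u : Lm} {b e : ℕ} :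
      StepV .dB t t₁ → RedCntV t₁ (b, e) u → RedCntV t (b + 1, e) u
  | sv {t t₁ u : Lm} {b e : ℕ} :
      StepV .sv t t₁ → RedCntV t₁ (b, e) u → RedCntV t (b, e + 1) u

/-- the CBN embedding into the λ!-calculus -/
def cbn : Lm → Tm
  | .var k => .var k
  | .lam t => .lam (cbn t)
  | .app t u => .app (cbn t) (.bang (cbn u))
  | .esub t u => .esub (cbn t) (.bang (cbn u))

/-- `deBang t = some s'` iff `t = L⟨!s⟩` and `s' = L⟨s⟩` -/
def deBang : Tm → Option Tm
  | .bang s => some s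
  | .esub t e => (deBang t).map (fun s => Tm.esub s e)
  | _ => none

/-- the CBV embedding into the λ!-calculus -/
def cbv : Lm → Tm
  | .var k => .bang (.var k)
  | .lam t => .bang (.lam (cbv t))
  | .app t u =>
      match deBang (cbv t) with
      | some r => Tm.app r (cbv u)
      | none => Tm.app (.der (cbv t)) (cbv u)
  | .esub t u => .esub (cbv t) (cbv u)

/-- Sized typing of system 𝒩 (call-by-name): `DerN Γ t τ n` means that there
is a derivation of `Γ ⊢ t : τ` of size `n` (counting all rules). -/
inductive DerN : Ctx → Lm → Ty → ℕ → Prop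
  | ax (k : ℕ) (σ : Ty) : DerN (Ctx.single k {σ}) (Lm.var k) σ 1
  | app {Γ : Ctx} {t u : Lm} {τ : Ty} {n : ℕ} (prs : List (Ctx × Ty × ℕ)) :
      DerN Γ t (Ty.arr (prs.map (·.2.1)) τ) n →
      (∀ p ∈ prs, DerN p.1 u p.2.1 p.2.2) →
      DerN (Γ + (prs.map (·.1)).sum) (Lm.app t u) τ
           (n + (prs.map (·.2.2)).sum + 1)
  | abs {Γ : Ctx} {t : Lm} {τ : Ty} {n : ℕ} (M : List Ty) :
      DerN Γ t τ n → Multiset.ofList M = Γ 0 →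
      DerN (Ctx.tail Γ) (Lm.lam t) (Ty.arr M τ) (n + 1)
  | es {Γ : Ctx} {t u : Lm} {τ : Ty} {n : ℕ} (prs : List (Ctx × Ty × ℕ)) :
      DerN Γ t τ n →
      Multiset.ofList (prs.map (·.2.1)) = Γ 0 →
      (∀ p ∈ prs, DerN p.1 u p.2.1 p.2.2) →
      DerN (Ctx.tail Γ + (prs.map (·.1)).sum) (Lm.esub t u) τ
           (n + (prs.map (·.2.2)).sum + 1)

/-- Sized typing of system 𝒱 (call-by-value): `DerV Γ t τ n` means that there
is a derivation of `Γ ⊢ t : τ` of size `n` (each rule counts 1, except that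
`ax` counts the cardinal of its multiset and `abs` contributes the sizes of
its premises plus the number of premises). -/
inductive DerV : Ctx → Lm → Ty → ℕ → Prop
  | ax (k : ℕ) (M : List Ty) :
      DerV (Ctx.single k (Multiset.ofList M)) (Lm.var k) (Ty.mult M) M.length
  | es {Γ Δ : Ctx} {t u : Lm} {σ : Ty} {M : List Ty} {n m : ℕ} :
      DerV Γ t σ n → DerV Δ u (Ty.mult M) m → Multiset.ofList M = Γ 0 →
      DerV (Ctx.tail Γ + Δ) (Lm.esub t u) σ (n + m + 1)
  | abs {t : Lm} (prs : List (Ctx × List Ty × Ty × ℕ)) :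
      (∀ p ∈ prs, DerV p.1 t p.2.2.1 p.2.2.2) →
      (∀ p ∈ prs, Multiset.ofList p.2.1 = p.1 0) →
      DerV ((prs.map (fun p => Ctx.tail p.1)).sum) (Lm.lam t)
           (Ty.mult (prs.map (fun p => Ty.arr p.2.1 p.2.2.1)))
           ((prs.map (·.2.2.2)).sum + prs.length)
  | app {Γ Δ : Ctx} {t u : Lm} {M : List Ty} {τ : Ty} {n m : ℕ} :
      DerV Γ t (Ty.mult [Ty.arr M τ]) n → DerV Δ u (Ty.mult M) m →
      DerV (Γ + Δ) (Lm.app t u) τ (n + m + 1)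


/-! Induction on the derivation of `t`, generalised from the variable `0` to an arbitrary
de Bruijn index `j` so that it passes under binders. The derivations of `u` form a family indexed
by the multiset type of `j`, which is split along the sum of contexts at every rule with several
premises. At an axiom for `j` the single derivation of `u`, renamed past the `j` binders, replaces
the axiom: this is where the `- |I|` in the size comes from. -/

namespace Tm

theorem liftR_id : liftR id = id := by
  funext k
  cases k <;> rfl

theorem liftR_comp (f g : ℕ → ℕ) : liftR f ∘ liftR g = liftR (f ∘ g) := by
  funext k
  cases k <;> rfl

theorem liftR_injective {f : ℕ → ℕ} (hf : Function.Injective f) :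
    Function.Injective (liftR f) := by
  rintro (_ | a) (_ | b) h
  · rfl
  · exact absurd h (Nat.succ_ne_zero _).symm
  · exact absurd h (Nat.succ_ne_zero _)
  · exact congrArg (· + 1) (hf (Nat.succ_injective h))

theorem rename_id (t : Tm) : rename id t = t := by
  induction t <;> simp_all [rename, liftR_id]

theorem rename_rename (f g : ℕ → ℕ) (t : Tm) :
    rename f (rename g t) = rename (f ∘ g) t := by
  induction t generalizing f g <;> simp_all [rename, liftR_comp]

def substAt (j : ℕ) (u : Tm) : ℕ → Tm := fun k =>
  if k < j then var k else if k = j then rename (· + j) u else var (k - 1)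

theorem substAt_self (j : ℕ) (u : Tm) : substAt j u j = rename (· + j) u := by
  simp [substAt]

theorem substAt_of_ne {j k : ℕ} (h : k ≠ j) (u : Tm) :
    substAt j u k = var (if k < j then k else k - 1) := by
  simp only [substAt, if_neg h]
  split_ifs <;> rfl

theorem liftS_substAt (j : ℕ) (u : Tm) : liftS (substAt j u) = substAt (j + 1) u := by
  funext k
  rcases k with _ | k
  · simp [liftS, substAt]
  · rcases lt_trichotomy k j with h | rfl | h
    · simp [liftS, substAt, h, rename]
    · simp only [liftS, substAt, lt_irrefl, if_true, if_false]
      rw [rename_rename]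
      rfl
    · simp [liftS, substAt, rename, h.not_gt, h.ne', Nat.sub_add_cancel (Nat.one_le_of_lt h)]

theorem subst0_eq_subst_substAt (u t : Tm) : subst0 u t = subst (substAt 0 u) t := by
  unfold subst0 substIn
  congr 1
  funext k
  rcases k with _ | k
  · exact (rename_id u).symm
  · rfl

end Tm

namespace Ctx

noncomputable def rename (f : ℕ → ℕ) : Ctx →+ Ctx :=
  Function.ExtendByZero.hom (Multiset Ty) f

theorem rename_apply {f : ℕ → ℕ} (hf : Function.Injective f) (Γ : Ctx) (k : ℕ) :
    rename f Γ (f k) = Γ k :=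
  hf.extend_apply Γ 0 k

theorem rename_apply_of_forall_ne {f : ℕ → ℕ} {i : ℕ} (hi : ∀ k, f k ≠ i) (Γ : Ctx) :
    rename f Γ i = 0 :=
  Function.extend_apply' Γ (0 : Ctx) i fun ⟨k, hk⟩ => hi k hk

theorem rename_id (Γ : Ctx) : rename id Γ = Γ :=
  Function.extend_id Γ 0

theorem rename_single {f : ℕ → ℕ} (hf : Function.Injective f) (k : ℕ) (M : Multiset Ty) :
    rename f (single k M) = single (f k) M := by
  funext i
  by_cases hi : ∃ a, f a = i
  · obtain ⟨a, rfl⟩ := hi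
    simp [rename_apply hf, single, hf.eq_iff]
  · simp only [not_exists] at hi
    rw [rename_apply_of_forall_ne hi]
    exact (if_neg fun h => hi k h.symm).symm

theorem rename_liftR_apply_zero {f : ℕ → ℕ} (hf : Function.Injective f) (Γ : Ctx) :
    rename (Tm.liftR f) Γ 0 = Γ 0 :=
  rename_apply (Tm.liftR_injective hf) Γ 0

theorem tail_rename_liftR {f : ℕ → ℕ} (hf : Function.Injective f) (Γ : Ctx) :
    tail (rename (Tm.liftR f) Γ) = rename f (tail Γ) := by
  funext k
  by_cases hk : ∃ a, f a = k
  · obtain ⟨a, rfl⟩ := hk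
    exact (rename_apply (Tm.liftR_injective hf) Γ (a + 1)).trans (rename_apply hf (tail Γ) a).symm
  · simp only [not_exists] at hk
    refine (rename_apply_of_forall_ne ?_ Γ).trans (rename_apply_of_forall_ne hk _).symm
    rintro (_ | a) h
    · exact Nat.succ_ne_zero k h.symm
    · exact hk a (Nat.succ_injective h)

theorem rename_add_succ_apply_zero (j : ℕ) (Δ : Ctx) : rename (· + (j + 1)) Δ 0 = 0 :=
  rename_apply_of_forall_ne (fun _ => Nat.succ_ne_zero _) Δ

theorem tail_rename_add_succ (j : ℕ) (Δ : Ctx) :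
    tail (rename (· + (j + 1)) Δ) = rename (· + j) Δ := by
  funext k
  by_cases hk : j ≤ k
  · obtain ⟨a, rfl⟩ := Nat.exists_eq_add_of_le' hk
    exact (rename_apply (add_left_injective (j + 1)) Δ a).trans
      (rename_apply (add_left_injective j) Δ a).symm
  · exact (rename_apply_of_forall_ne (fun a h => hk (by omega)) Δ).trans
      (rename_apply_of_forall_ne (fun a h => hk (by omega)) Δ).symm

theorem tail_add (Γ Δ : Ctx) : tail (Γ + Δ) = tail Γ + tail Δ := rfl

def erase (j : ℕ) : Ctx →+ Ctx where
  toFun Γ k := Γ (if k < j then k else k + 1)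
  map_zero' := rfl
  map_add' _ _ := rfl

theorem erase_zero (Γ : Ctx) : erase 0 Γ = tail Γ := rfl

theorem erase_single_self (j : ℕ) (M : Multiset Ty) : erase j (single j M) = 0 := by
  funext k
  simp only [erase, single, AddMonoidHom.coe_mk, ZeroHom.coe_mk]
  split_ifs <;> first | rfl | omega

theorem erase_single_of_ne {j k : ℕ} (h : k ≠ j) (M : Multiset Ty) :
    erase j (single k M) = single (if k < j then k else k - 1) M := by
  funext i
  simp only [erase, single, AddMonoidHom.coe_mk, ZeroHom.coe_mk]
  split_ifs <;> first | rfl | omega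

theorem erase_succ_apply_zero (j : ℕ) (Γ : Ctx) : erase (j + 1) Γ 0 = Γ 0 := rfl

theorem tail_erase_succ (j : ℕ) (Γ : Ctx) : tail (erase (j + 1) Γ) = erase j (tail Γ) := by
  funext k
  simp only [tail, erase, AddMonoidHom.coe_mk, ZeroHom.coe_mk]
  split_ifs <;> first | rfl | omega

end Ctx

namespace DerU

theorem rename {Γ : Ctx} {t : Tm} {τ : Ty} {n : ℕ} (ht : DerU Γ t τ n) {f : ℕ → ℕ}
    (hf : Function.Injective f) : DerU (Ctx.rename f Γ) (t.rename f) τ n := by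
  induction ht generalizing f with
  | ax k σ =>
      rw [Ctx.rename_single hf]
      exact ax (f k) σ
  | app _ _ ih₁ ih₂ =>
      rw [map_add]
      exact app (ih₁ hf) (ih₂ hf)
  | abs M _ hM ih =>
      have hd := abs M (ih (Tm.liftR_injective hf))
        (hM.trans (Ctx.rename_liftR_apply_zero hf _).symm)
      rwa [Ctx.tail_rename_liftR hf] at hd
  | es _ _ hM ih₁ ih₂ =>
      have hd := es (ih₁ (Tm.liftR_injective hf)) (ih₂ hf)
        (hM.trans (Ctx.rename_liftR_apply_zero hf _).symm)
      rwa [Ctx.tail_rename_liftR hf, ← map_add] at hd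
  | bg prs _ ih =>
      have hd := bg (prs.map fun p => (Ctx.rename f p.1, p.2)) (by
        simp only [List.mem_map]
        rintro _ ⟨p, hp, rfl⟩
        exact ih p hp hf)
      simpa only [Tm.rename, map_list_sum, List.map_map, Function.comp_def] using hd
  | dr _ ih => exact dr (ih hf)

theorem bang_nil (t : Tm) : DerU 0 (Tm.bang t) (Ty.mult []) 0 :=
  bg [] (by simp)

theorem bang_cons {Γ Δ : Ctx} {t : Tm} {σ : Ty} {L : List Ty} {n m : ℕ}
    (ht : DerU Γ t σ n) (hb : DerU Δ (Tm.bang t) (Ty.mult L) m) :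
    DerU (Γ + Δ) (Tm.bang t) (Ty.mult (σ :: L)) (n + m) := by
  cases hb with
  | bg prs h =>
    exact bg ((Γ, σ, n) :: prs) (by
      intro p hp
      rcases List.mem_cons.mp hp with rfl | hp
      exacts [ht, h p hp])

end DerU

/-- `DerUFamily u Δ M s` is a family of derivations `Δᵢ ⊢ u : σᵢ` of sizes `sᵢ`,
with `Δ = Σᵢ Δᵢ`, `M = [σᵢ]ᵢ` and `s = Σᵢ sᵢ`. -/
inductive DerUFamily (u : Tm) : Ctx → Multiset Ty → ℕ → Prop
  | zero : DerUFamily u 0 0 0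
  | cons {Δ Δ' : Ctx} {σ : Ty} {M : Multiset Ty} {m s : ℕ} :
      DerU Δ u σ m → DerUFamily u Δ' M s → DerUFamily u (Δ + Δ') (σ ::ₘ M) (m + s)

namespace DerUFamily

theorem of_list {u : Tm} (prs : List (Ctx × Ty × ℕ)) (hu : ∀ p ∈ prs, DerU p.1 u p.2.1 p.2.2) :
    DerUFamily u (prs.map (·.1)).sum (prs.map (·.2.1)) (prs.map (·.2.2)).sum := by
  induction prs with
  | nil => exact zero
  | cons p prs ih =>
      exact cons (hu p List.mem_cons_self) (ih fun q hq => hu q (List.mem_cons_of_mem p hq))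

theorem eq_zero {u : Tm} {Δ : Ctx} {s : ℕ} (h : DerUFamily u Δ 0 s) : Δ = 0 ∧ s = 0 := by
  generalize hM : (0 : Multiset Ty) = M at h
  cases h with
  | zero => exact ⟨rfl, rfl⟩
  | cons _ _ => exact absurd hM.symm Multiset.cons_ne_zero

theorem derU_of_singleton {u : Tm} {Δ : Ctx} {σ : Ty} {s : ℕ}
    (h : DerUFamily u Δ {σ} s) : DerU Δ u σ s := by
  generalize hM : ({σ} : Multiset Ty) = M at h
  cases h with
  | zero => exact absurd hM (Multiset.singleton_ne_zero σ)
  | cons hd ht =>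
      obtain ⟨rfl, rfl⟩ := (Multiset.singleton_eq_cons_iff _).mp hM
      obtain ⟨rfl, rfl⟩ := ht.eq_zero
      simpa using hd

theorem exists_split {u : Tm} {Δ : Ctx} {A B : Multiset Ty} {s : ℕ}
    (h : DerUFamily u Δ (A + B) s) :
    ∃ Δ₁ Δ₂ s₁ s₂, DerUFamily u Δ₁ A s₁ ∧ DerUFamily u Δ₂ B s₂ ∧ Δ = Δ₁ + Δ₂ ∧ s = s₁ + s₂ := by
  generalize hM : A + B = M at h
  induction h generalizing A B with
  | zero =>
      obtain ⟨rfl, rfl⟩ := add_eq_zero.mp hM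
      exact ⟨0, 0, 0, 0, zero, zero, (add_zero 0).symm, rfl⟩
  | @cons Δ Δ' σ M m s hd _ ih =>
      wlog hσ : σ ∈ A generalizing A B
      · have hσB : σ ∈ B := (Multiset.mem_add.mp (hM ▸ Multiset.mem_cons_self σ M)).resolve_left hσ
        obtain ⟨Δ₁, Δ₂, s₁, s₂, h₁, h₂, hΔ, hs⟩ := this ((add_comm B A).trans hM) hσB
        exact ⟨Δ₂, Δ₁, s₂, s₁, h₂, h₁, by rw [hΔ, add_comm], by omega⟩
      obtain ⟨A', rfl⟩ := Multiset.exists_cons_of_mem hσ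
      obtain ⟨Δ₁, Δ₂, s₁, s₂, h₁, h₂, rfl, rfl⟩ :=
        ih ((Multiset.cons_inj_right σ).mp (by rw [← Multiset.cons_add]; exact hM))
      exact ⟨Δ + Δ₁, Δ₂, m + s₁, s₂, cons hd h₁, h₂, (add_assoc _ _ _).symm, by omega⟩

end DerUFamily

namespace DerU

theorem subst_substAt {Γ : Ctx} {t : Tm} {τ : Ty} {n : ℕ} (ht : DerU Γ t τ n) {u : Tm} :
    ∀ {j : ℕ} {Δ : Ctx} {s : ℕ}, DerUFamily u Δ (Γ j) s →
      ∃ m, DerU (Ctx.erase j Γ + Ctx.rename (· + j) Δ) (t.subst (Tm.substAt j u)) τ m ∧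
        m + (Γ j).card = n + s := by
  induction ht with
  | ax k σ =>
      intro j Δ s hu
      by_cases hkj : k = j
      · subst hkj
        have hd := (DerUFamily.derU_of_singleton (by simpa [Ctx.single] using hu)).rename
          (add_left_injective k)
        refine ⟨s, ?_, by simp [Ctx.single, add_comm]⟩
        simpa [Ctx.erase_single_self, Tm.subst, Tm.substAt_self] using hd
      · have hΓ : Ctx.single k {σ} j = 0 := if_neg (Ne.symm hkj)
        rw [hΓ] at hu ⊢
        obtain ⟨rfl, rfl⟩ := hu.eq_zero
        refine ⟨1, ?_, rfl⟩
        rw [map_zero, add_zero, Ctx.erase_single_of_ne hkj, Tm.subst, Tm.substAt_of_ne hkj]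
        exact ax _ σ
  | @app G D _ _ _ _ _ _ _ _ ih₁ ih₂ =>
      intro j Δ s hu
      obtain ⟨Δ₁, Δ₂, s₁, s₂, hu₁, hu₂, rfl, rfl⟩ :=
        DerUFamily.exists_split (A := G j) (B := D j) hu
      obtain ⟨m₁, hd₁, hm₁⟩ := ih₁ hu₁
      obtain ⟨m₂, hd₂, hm₂⟩ := ih₂ hu₂
      refine ⟨m₁ + m₂ + 1, ?_, ?_⟩
      · rw [map_add, map_add, add_add_add_comm]
        exact app hd₁ hd₂
      · simp only [Pi.add_apply, Multiset.card_add]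
        omega
  | @abs G _ _ _ M _ hM ih =>
      intro j Δ s hu
      obtain ⟨m, hd, hm⟩ := ih (j := j + 1) hu
      have hd' := abs M hd (by
        rw [Pi.add_apply, Ctx.erase_succ_apply_zero, Ctx.rename_add_succ_apply_zero, add_zero]
        exact hM)
      rw [Ctx.tail_add, Ctx.tail_erase_succ, Ctx.tail_rename_add_succ] at hd'
      refine ⟨m + 1, ?_, ?_⟩
      · simpa only [Tm.subst, Tm.liftS_substAt] using hd'
      · simp only [Ctx.tail] at hm ⊢
        omega
  | @es G D _ _ _ M _ _ _ _ hM ih₁ ih₂ =>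
      intro j Δ s hu
      obtain ⟨Δ₁, Δ₂, s₁, s₂, hu₁, hu₂, rfl, rfl⟩ :=
        DerUFamily.exists_split (A := G (j + 1)) (B := D j) hu
      obtain ⟨m₁, hd₁, hm₁⟩ := ih₁ hu₁
      obtain ⟨m₂, hd₂, hm₂⟩ := ih₂ hu₂
      have hd := es hd₁ hd₂ (by
        rw [Pi.add_apply, Ctx.erase_succ_apply_zero, Ctx.rename_add_succ_apply_zero, add_zero]
        exact hM)
      rw [Ctx.tail_add, Ctx.tail_erase_succ, Ctx.tail_rename_add_succ] at hd
      refine ⟨m₁ + m₂ + 1, ?_, ?_⟩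
      · rw [map_add, map_add, add_add_add_comm]
        simpa only [Tm.subst, Tm.liftS_substAt] using hd
      · simp only [Pi.add_apply, Ctx.tail, Multiset.card_add]
        omega
  | bg prs h ih =>
      intro j Δ s hu
      clear h
      induction prs generalizing Δ s with
      | nil =>
          obtain ⟨rfl, rfl⟩ := DerUFamily.eq_zero (by simpa using hu)
          exact ⟨0, by simpa [Tm.subst] using bang_nil _, by simp⟩
      | cons p prs ihl =>
          simp only [List.map_cons, List.sum_cons, Pi.add_apply] at hu ⊢
          obtain ⟨Δ₁, Δ₂, s₁, s₂, hu₁, hu₂, rfl, rfl⟩ := hu.exists_split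
          obtain ⟨m₁, hd₁, hm₁⟩ := ih p List.mem_cons_self hu₁
          obtain ⟨m₂, hd₂, hm₂⟩ := ihl (fun q hq => ih q (List.mem_cons_of_mem p hq)) hu₂
          refine ⟨m₁ + m₂, ?_, ?_⟩
          · rw [map_add, map_add, add_add_add_comm]
            exact bang_cons hd₁ hd₂
          · rw [Multiset.card_add]
            omega
  | dr _ ih =>
      intro j Δ s hu
      obtain ⟨m, hd, hm⟩ := ih hu
      exact ⟨m + 1, dr hd, by omega⟩

end DerU

/-- The variable `x` is the de Bruijn index `0`; the family `(Δᵢ, σᵢ, mᵢ)_{i∈I}` is the list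
`prs`. -/
theorem substitution {Γ : Ctx} {t u : Tm} {τ : Ty} {n : ℕ}
    (prs : List (Ctx × Ty × ℕ))
    (ht : DerU Γ t τ n)
    (hx : Γ 0 = Multiset.ofList (prs.map (·.2.1)))
    (hu : ∀ p ∈ prs, DerU p.1 u p.2.1 p.2.2) :
    ∃ m : ℕ,
      DerU (Ctx.tail Γ + (prs.map (·.1)).sum) (Tm.subst0 u t) τ m ∧
      m + prs.length = n + (prs.map (·.2.2)).sum := by
  obtain ⟨m, hd, hm⟩ := ht.subst_substAt (j := 0) (hx ▸ DerUFamily.of_list prs hu)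
  refine ⟨m, ?_, by simpa [hx] using hm⟩
  rwa [Ctx.erase_zero, show (· + 0 : ℕ → ℕ) = id from rfl, Ctx.rename_id,
    ← Tm.subst0_eq_subst_substAt] at hd
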